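/- arXiv:2605.02518 — 2 statements merged into one kernel-verified Lean document; each statement's English description precedes it below -/
import Mathlib

section
/- Let q be a positive integer, G = SL₂(ℤ/qℤ), and μ : G → ℂ any function. For Q | q define μ_Q(x) = (1/|K_Q|)·Σ_{y ≡ x (mod Q)} μ(y) and f_Q = Σ_{d | rad(Q)} μ̃(d)·μ_{Q/d}, where rad(Q) is the radical of Q and μ̃ is the Möbius function. Then for every divisor Q of q: (i) f_Q(x) = f_Q(y) whenever x ≡ y (mod Q); and (ii) for every divisor q′ of Q with q′ ≠ Q and every x ∈ G, Σ_{y ∈ G, y ≡ x (mod q′)} f_Q(y) = 0. That is, f_Q lies in the space H_Q. -/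
/-!
Write `Γ(n)` for the kernel of reduction `SL₂(ℤ/qℤ) → SL₂(ℤ/nℤ)`, a normal subgroup. Then `μ_n`
is the average of `μ` over the cosets `x Γ(n)`, and summing `μ_m` over a class mod `c` is `|Γ(c)|`
times the average over `Γ(c)` of the average over `Γ(m)`. For normal subgroups such an iterated
average is the average over `Γ(c) ⊔ Γ(m)`, and this join is `Γ(gcd c m)`: the Chinese remainder
theorem solves the congruences entrywise modulo `lcm c m`, and `SL₂(ℤ) → SL₂(ℤ/nℤ)` is surjective.
Hence `Σ_{y ≡ x (q′)} f_Q(y) = |Γ(q′)| Σ_{d ∣ rad Q} μ̃(d) μ_{gcd(q′, Q/d)}(x)`. Choosing a prime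
`p` with `q′ ∣ Q/p`, the divisors `d` and `d p` (`p ∤ d`) give the same gcd and opposite Möbius
signs.
Part (i) holds since `Γ(Q) ≤ Γ(Q/d)`, so each `μ_{Q/d}` is constant on classes mod `Q`.
-/

open scoped Classical

/-- `SL₂(ℤ/qℤ)`. -/
abbrev SL2 (q : ℕ) := Matrix.SpecialLinearGroup (Fin 2) (ZMod q)

/-- `y ≡ x (mod Q)`: the entrywise reductions of `x` and `y` modulo `Q` agree. -/
def redEq (q Q : ℕ) (x y : SL2 q) : Prop :=
  ∀ i j, (ZMod.cast ((x : Matrix (Fin 2) (Fin 2) (ZMod q)) i j) : ZMod Q) =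
    ZMod.cast ((y : Matrix (Fin 2) (Fin 2) (ZMod q)) i j)

/-- The congruence class of `x` modulo `Q` in `SL₂(ℤ/qℤ)`. -/
noncomputable def cclass (q : ℕ) [NeZero q] (Q : ℕ) (x : SL2 q) : Finset (SL2 q) :=
  Finset.univ.filter (fun y => redEq q Q x y)

/-- `K_Q`, the kernel of reduction mod `Q`, i.e. the congruence class of `1` mod `Q`. -/
noncomputable def KQ (q : ℕ) [NeZero q] (Q : ℕ) : Finset (SL2 q) :=
  cclass q Q 1

/-- `μ_Q(x) = (1/|K_Q|)·Σ_{y ≡ x (mod Q)} μ(y)`. -/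
noncomputable def muQ (q : ℕ) [NeZero q] (Q : ℕ) (μ : SL2 q → ℂ) (x : SL2 q) : ℂ :=
  (1 / ((KQ q Q).card : ℂ)) * ∑ y ∈ cclass q Q x, μ y

/-- The radical of `Q`: the product of its distinct prime divisors. -/
def rad (Q : ℕ) : ℕ := ∏ p ∈ Q.primeFactors, p

/-- `f_Q = Σ_{d | rad(Q)} μ̃(d)·μ_{Q/d}`, with `μ̃` the Möbius function. -/
noncomputable def fQ (q : ℕ) [NeZero q] (Q : ℕ) (μ : SL2 q → ℂ) (x : SL2 q) : ℂ :=
  ∑ d ∈ (rad Q).divisors, ((ArithmeticFunction.moebius d : ℤ) : ℂ) * muQ q (Q / d) μ x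

theorem Int.exists_isCoprime_add_mul {c d m : ℤ} (hc : c ≠ 0)
    (hcdm : ∀ p : ℤ, Prime p → p ∣ c → p ∣ d → ¬ p ∣ m) : ∃ t, IsCoprime c (d + t * m) := by
  -- every prime factor of `c` divides exactly one of `d` and `t * m`
  let S := c.natAbs.primeFactors.filter fun p : ℕ => ¬ (p : ℤ) ∣ d
  refine ⟨∏ p ∈ S, (p : ℤ), isCoprime_of_prime_dvd (fun h => hc h.1) fun z hz hzc hzd => ?_⟩
  by_cases hd : z ∣ d
  · rcases hz.dvd_or_dvd ((dvd_add_right hd).1 hzd) with ht | hm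
    · obtain ⟨p, hpS, hzp⟩ := (hz.dvd_finsetProd_iff _).1 ht
      have hpS := Finset.mem_filter.1 hpS
      have hp : Prime (p : ℤ) := Nat.prime_iff_prime_int.1 (Nat.prime_of_mem_primeFactors hpS.1)
      exact hpS.2 ((hz.associated_of_dvd hp hzp).dvd_iff_dvd_left.1 hd)
    · exact hcdm z hz hzc hd hm
  · have hzS : z.natAbs ∈ S := Finset.mem_filter.2
      ⟨Nat.mem_primeFactors.2 ⟨Int.prime_iff_natAbs_prime.1 hz, Int.natAbs_dvd_natAbs.2 hzc,
        Int.natAbs_ne_zero.2 hc⟩, by rwa [Int.natAbs_dvd]⟩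
    have ht : z ∣ ∏ p ∈ S, (p : ℤ) := Int.natAbs_dvd.1 (Finset.dvd_prod_of_mem _ hzS)
    exact hd ((dvd_add_left (ht.mul_right m)).1 hzd)

theorem ZMod.exists_isCoprime_intCast_eq {m : ℕ} [NeZero m] {c d : ZMod m} (h : IsCoprime c d) :
    ∃ c' d' : ℤ, IsCoprime c' d' ∧ (c' : ZMod m) = c ∧ (d' : ZMod m) = d := by
  obtain ⟨c₀, hc₀, rfl⟩ : ∃ c₀ : ℤ, c₀ ≠ 0 ∧ (c₀ : ZMod m) = c :=
    ⟨c.val + m, by have := NeZero.pos m; omega, by simp⟩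
  obtain ⟨d₀, rfl⟩ := ZMod.intCast_surjective d
  obtain ⟨u, v, huv⟩ := h
  obtain ⟨u, rfl⟩ := ZMod.intCast_surjective u
  obtain ⟨v, rfl⟩ := ZMod.intCast_surjective v
  have hm : (m : ℤ) ∣ u * c₀ + v * d₀ - 1 := by
    rw [← ZMod.intCast_zmod_eq_zero_iff_dvd]
    push_cast
    rw [huv, sub_self]
  obtain ⟨t, ht⟩ := Int.exists_isCoprime_add_mul (m := m) hc₀ fun p hp hpc hpd hpm =>
    hp.not_isUnit <| isUnit_of_dvd_one <|
      (dvd_sub_right (dvd_add (hpc.mul_left u) (hpd.mul_left v))).1 (hpm.trans hm)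
  exact ⟨c₀, d₀ + t * m, ht, rfl, by simp⟩

theorem Matrix.SpecialLinearGroup.map_intCast_surjective_fin_two (m : ℕ) [NeZero m] :
    Function.Surjective
      (Matrix.SpecialLinearGroup.map (n := Fin 2) (Int.castRingHom (ZMod m))) := by
  intro A
  obtain ⟨c, d, ⟨u, v, huv⟩, hc, hd⟩ := ZMod.exists_isCoprime_intCast_eq (A.isCoprime_row 1)
  obtain ⟨a, ha⟩ := ZMod.intCast_surjective (A 0 0)
  obtain ⟨b, hb⟩ := ZMod.intCast_surjective (A 0 1)
  obtain ⟨k, hk⟩ : (m : ℤ) ∣ a * d - b * c - 1 := by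
    rw [← ZMod.intCast_zmod_eq_zero_iff_dvd]
    push_cast
    rw [ha, hb, hc, hd, ← Matrix.det_fin_two, A.det_coe, sub_self]
  -- lift the bottom row to a coprime pair, then correct the top row by the Bézout relation
  refine ⟨⟨!![a - m * k * v, b + m * k * u; c, d], ?_⟩, Subtype.ext ?_⟩
  · rw [Matrix.det_fin_two_of]
    linear_combination hk - (m * k : ℤ) * huv
  · change (Int.castRingHom (ZMod m)).mapMatrix !![_, _; _, _] = A
    ext i j
    fin_cases i <;> fin_cases j <;> simp [ha, hb, hc, hd]

theorem ZMod.exists_cast_eq_and_cast_eq {a b : ℕ} [NeZero a] [NeZero b] {x : ZMod a} {y : ZMod b}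
    (h : (ZMod.cast x : ZMod (a.gcd b)) = ZMod.cast y) :
    ∃ z : ZMod (a.lcm b), (ZMod.cast z : ZMod a) = x ∧ (ZMod.cast z : ZMod b) = y := by
  rw [ZMod.cast_eq_val, ZMod.cast_eq_val, ZMod.natCast_eq_natCast_iff] at h
  obtain ⟨k, hka, hkb⟩ := Nat.chineseRemainder' h
  refine ⟨k, ?_, ?_⟩
  · rw [ZMod.cast_natCast (Nat.dvd_lcm_left a b), (ZMod.natCast_eq_natCast_iff _ _ _).2 hka,
      ZMod.natCast_zmod_val]
  · rw [ZMod.cast_natCast (Nat.dvd_lcm_right a b), (ZMod.natCast_eq_natCast_iff _ _ _).2 hkb,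
      ZMod.natCast_zmod_val]

theorem ZMod.eq_of_cast_eq_of_cast_eq {a b : ℕ} [NeZero a] [NeZero b] {z w : ZMod (a.lcm b)}
    (ha : (ZMod.cast z : ZMod a) = ZMod.cast w) (hb : (ZMod.cast z : ZMod b) = ZMod.cast w) :
    z = w := by
  have : NeZero (a.lcm b) := ⟨Nat.lcm_ne_zero (NeZero.ne a) (NeZero.ne b)⟩
  rw [ZMod.cast_eq_val, ZMod.cast_eq_val, ZMod.natCast_eq_natCast_iff] at ha hb
  rw [← ZMod.natCast_zmod_val z, ← ZMod.natCast_zmod_val w, ZMod.natCast_eq_natCast_iff]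
  exact Nat.mod_lcm ha hb

theorem Nat.gcd_mul_left_eq_of_dvd_mul {a d p x : ℕ} (hdp : d.Coprime p) (h : a ∣ d * x) :
    a.gcd (p * x) = a.gcd x := by
  refine Nat.dvd_antisymm (Nat.dvd_gcd (Nat.gcd_dvd_left _ _) ?_)
    (Nat.gcd_dvd_gcd_mul_left_right a x p)
  have := Nat.gcd_dvd_gcd_of_dvd_left (p * x) h
  rwa [Nat.gcd_mul_right, hdp.gcd_eq_one, one_mul] at this

theorem Nat.gcd_div_mul_eq_gcd_div {a Q d p : ℕ} (hp : p.Prime) (hd : 0 < d)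
    (hdp : d.Coprime p) (hpdQ : p * d ∣ Q) (ha : a ∣ Q / p) :
    a.gcd (Q / (d * p)) = a.gcd (Q / d) := by
  obtain ⟨X, rfl⟩ := hpdQ
  rw [mul_assoc, Nat.mul_div_cancel_left _ hp.pos] at ha
  rw [mul_comm d p, Nat.mul_div_cancel_left _ (Nat.mul_pos hp.pos hd), mul_comm p d, mul_assoc,
    Nat.mul_div_cancel_left _ hd, Nat.gcd_mul_left_eq_of_dvd_mul hdp ha]

theorem Nat.sum_divisors_mul_prime {M : Type*} [AddCommMonoid M] {m p : ℕ} (hp : p.Prime)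
    (hmp : m.Coprime p) (f : ℕ → M) :
    ∑ d ∈ (m * p).divisors, f d = ∑ d ∈ m.divisors, (f d + f (d * p)) := by
  rw [Nat.divisors_mul, ← Finset.image_mul_product, Finset.sum_image hmp.mul_injOn_divisors,
    Finset.sum_product, hp.divisors]
  refine Finset.sum_congr rfl fun d _ => ?_
  rw [Finset.sum_pair hp.one_lt.ne, mul_one]

theorem sum_divisors_moebius_mul_eq_zero {R : Type*} [CommRing R] {n p : ℕ} (hn : Squarefree n)
    (hp : p.Prime) (hpn : p ∣ n) {F : ℕ → R} (hF : ∀ d ∈ (n / p).divisors, F (d * p) = F d) :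
    ∑ d ∈ n.divisors, (ArithmeticFunction.moebius d : R) * F d = 0 := by
  have hcop : (n / p).Coprime p := Nat.coprime_comm.1 <| hp.coprime_iff_not_dvd.2 fun h =>
    hp.prime.not_isUnit (hn p (Nat.mul_dvd_of_dvd_div hpn h))
  rw [← Nat.div_mul_cancel hpn, Nat.sum_divisors_mul_prime hp hcop]
  refine Finset.sum_eq_zero fun d hd => ?_
  have hdp : d.Coprime p := hcop.coprime_dvd_left (Nat.dvd_of_mem_divisors hd)
  rw [hF d hd, ArithmeticFunction.isMultiplicative_moebius.map_mul_of_coprime hdp,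
    ArithmeticFunction.moebius_apply_prime hp]
  push_cast
  ring

theorem squarefree_rad (Q : ℕ) : Squarefree (rad Q) :=
  Finset.squarefree_prod_of_pairwise_isCoprime
    (fun _ hp _ hr hpr => Nat.coprime_iff_isRelPrime.1 <|
      (Nat.coprime_primes (Nat.prime_of_mem_primeFactors hp)
        (Nat.prime_of_mem_primeFactors hr)).2 hpr)
    fun _ hp => (Nat.prime_of_mem_primeFactors hp).prime.squarefree

theorem exists_prime_dvd_and_dvd_div {q' Q : ℕ} (hQ : Q ≠ 0) (h : q' ∣ Q) (hne : q' ≠ Q) :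
    ∃ p, p.Prime ∧ p ∣ Q ∧ q' ∣ Q / p := by
  obtain ⟨r, rfl⟩ := h
  have hr : r ≠ 1 := by rintro rfl; simp at hne
  refine ⟨r.minFac, Nat.minFac_prime hr, (Nat.minFac_dvd r).mul_left q', ?_⟩
  rw [Nat.mul_div_assoc _ (Nat.minFac_dvd r)]
  exact dvd_mul_right _ _

section Averaging

variable {G 𝕜 : Type*} [Group G]

def rightStabilizer {α : Type*} (f : G → α) : Subgroup G where
  carrier := {g | ∀ x, f (x * g) = f x}
  mul_mem' ha hb x := by rw [← mul_assoc, hb, ha]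
  one_mem' x := by rw [mul_one]
  inv_mem' ha x := by rw [← ha, inv_mul_cancel_right]

variable [Fintype G] [Field 𝕜]

noncomputable def cosetAvg (H : Subgroup G) (f : G → 𝕜) (x : G) : 𝕜 :=
  (Nat.card H : 𝕜)⁻¹ * ∑ h : H, f (x * h)

theorem le_rightStabilizer_cosetAvg (H : Subgroup G) (f : G → 𝕜) :
    H ≤ rightStabilizer (cosetAvg H f) := by
  intro h hh x
  simp_rw [cosetAvg, mul_assoc]
  congr 1
  exact Equiv.sum_comp (Equiv.mulLeft (⟨h, hh⟩ : H)) fun k : H => f (x * k)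

theorem cosetAvg_eq_self [CharZero 𝕜] {H : Subgroup G} {f : G → 𝕜} (hf : H ≤ rightStabilizer f) :
    cosetAvg H f = f := by
  funext x
  have hH : (Nat.card H : 𝕜) ≠ 0 := Nat.cast_ne_zero.2 Nat.card_pos.ne'
  simp_rw [cosetAvg, fun h : H => hf h.2 x, Finset.sum_const, Finset.card_univ,
    ← Nat.card_eq_fintype_card, nsmul_eq_mul, inv_mul_cancel_left₀ hH]

theorem cosetAvg_cosetAvg_of_le [CharZero 𝕜] {H M : Subgroup G} (hHM : H ≤ M) (f : G → 𝕜) :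
    cosetAvg M (cosetAvg H f) = cosetAvg M f := by
  funext x
  have hH : (Nat.card H : 𝕜) ≠ 0 := Nat.cast_ne_zero.2 Nat.card_pos.ne'
  have hshift (h : H) : ∑ m : M, f (x * m * h) = ∑ m : M, f (x * m) := by
    simpa [mul_assoc] using
      Equiv.sum_comp (Equiv.mulRight (⟨h, hHM h.2⟩ : M)) fun m : M => f (x * m)
  simp_rw [cosetAvg, ← Finset.mul_sum]
  rw [Finset.sum_comm]
  simp_rw [hshift, Finset.sum_const, Finset.card_univ, ← Nat.card_eq_fintype_card, nsmul_eq_mul,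
    inv_mul_cancel_left₀ hH]

theorem cosetAvg_cosetAvg_of_normal [CharZero 𝕜] (H N : Subgroup G) [hN : N.Normal] (f : G → 𝕜) :
    cosetAvg H (cosetAvg N f) = cosetAvg (H ⊔ N) f := by
  set g := cosetAvg H (cosetAvg N f)
  have hNg : N ≤ rightStabilizer g := by
    intro n hn x
    simp only [g, cosetAvg.eq_1 H]
    congr 1
    refine Finset.sum_congr rfl fun h _ => ?_
    have hconj : (h : G)⁻¹ * n * h ∈ N := by simpa using hN.conj_mem n hn (h : G)⁻¹
    rw [← le_rightStabilizer_cosetAvg N f hconj (x * h)]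
    group
  calc g = cosetAvg (H ⊔ N) g :=
        (cosetAvg_eq_self (sup_le (le_rightStabilizer_cosetAvg H _) hNg)).symm
    _ = cosetAvg (H ⊔ N) f := by
      rw [cosetAvg_cosetAvg_of_le le_sup_left, cosetAvg_cosetAvg_of_le le_sup_right]

end Averaging

def reduction {m n : ℕ} (h : n ∣ m) : SL2 m →* SL2 n :=
  Matrix.SpecialLinearGroup.map (ZMod.castHom h (ZMod n))

theorem reduction_apply {m n : ℕ} (h : n ∣ m) (x : SL2 m) (i j : Fin 2) :
    reduction h x i j = ZMod.cast (x i j) := rfl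

theorem reduction_reduction {k m n : ℕ} (hk : k ∣ n) (hn : n ∣ m) (x : SL2 m) :
    reduction hk (reduction hn x) = reduction (hk.trans hn) x :=
  Matrix.SpecialLinearGroup.ext _ _ fun i j =>
    RingHom.congr_fun (ZMod.castHom_comp hk hn) (x i j)

theorem reduction_surjective {m n : ℕ} [NeZero m] (h : n ∣ m) :
    Function.Surjective (reduction h) := by
  have : NeZero n := ⟨ne_zero_of_dvd_ne_zero (NeZero.ne m) h⟩
  refine .of_comp (g := Matrix.SpecialLinearGroup.map (Int.castRingHom (ZMod m))) ?_
  convert Matrix.SpecialLinearGroup.map_intCast_surjective_fin_two n using 1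
  ext x i j
  simp [reduction_apply, ZMod.cast_intCast h]

theorem redEq_iff {q n : ℕ} (h : n ∣ q) {x y : SL2 q} :
    redEq q n x y ↔ reduction h x = reduction h y := by
  rw [Matrix.SpecialLinearGroup.ext_iff]
  rfl

theorem mem_cclass_iff {q n : ℕ} [NeZero q] (h : n ∣ q) {x y : SL2 q} :
    y ∈ cclass q n x ↔ x⁻¹ * y ∈ (reduction h).ker := by
  rw [cclass, Finset.mem_filter, redEq_iff h, MonoidHom.mem_ker, map_mul, map_inv,
    inv_mul_eq_one]
  simp only [Finset.mem_univ, true_and]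

theorem exists_reduction_eq_and_reduction_eq {q a b : ℕ} [NeZero q] (ha : a ∣ q) (hb : b ∣ q)
    {x z : SL2 q} (h : reduction ((Nat.gcd_dvd_left a b).trans ha) x =
      reduction ((Nat.gcd_dvd_left a b).trans ha) z) :
    ∃ y, reduction ha y = reduction ha x ∧ reduction hb y = reduction hb z := by
  have : NeZero a := ⟨ne_zero_of_dvd_ne_zero (NeZero.ne q) ha⟩
  have : NeZero b := ⟨ne_zero_of_dvd_ne_zero (NeZero.ne q) hb⟩
  have hxz : reduction (Nat.gcd_dvd_left a b) (reduction ha x) =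
      reduction (Nat.gcd_dvd_right a b) (reduction hb z) := by
    rwa [reduction_reduction, reduction_reduction]
  choose W hWa hWb using fun i j =>
    ZMod.exists_cast_eq_and_cast_eq (congrArg (· i j) hxz)
  -- `W` has determinant `1` because it does modulo `a` and modulo `b`
  have hdet (c : ℕ) (hc : c ∣ a.lcm b) (A : SL2 c)
      (hA : ∀ i j, (ZMod.cast (W i j) : ZMod c) = A i j) :
      (ZMod.cast (Matrix.of W).det : ZMod c) = ZMod.cast (1 : ZMod (a.lcm b)) := by
    rw [← ZMod.castHom_apply (h := hc), ← ZMod.castHom_apply (h := hc) (1 : ZMod _),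
      RingHom.map_det, map_one, ← A.det_coe]
    congr
    ext i j
    exact hA i j
  obtain ⟨y, hy⟩ := reduction_surjective (Nat.lcm_dvd ha hb)
    ⟨Matrix.of W, ZMod.eq_of_cast_eq_of_cast_eq (hdet a (Nat.dvd_lcm_left a b) _ hWa)
      (hdet b (Nat.dvd_lcm_right a b) _ hWb)⟩
  refine ⟨y, ?_, ?_⟩
  · rw [← reduction_reduction (Nat.dvd_lcm_left a b) (Nat.lcm_dvd ha hb), hy]
    exact Matrix.SpecialLinearGroup.ext _ _ hWa
  · rw [← reduction_reduction (Nat.dvd_lcm_right a b) (Nat.lcm_dvd ha hb), hy]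
    exact Matrix.SpecialLinearGroup.ext _ _ hWb

theorem ker_reduction_sup_ker_reduction {q a b : ℕ} [NeZero q] (ha : a ∣ q) (hb : b ∣ q) :
    (reduction ha).ker ⊔ (reduction hb).ker =
      (reduction ((Nat.gcd_dvd_left a b).trans ha)).ker := by
  apply le_antisymm
  · refine sup_le (fun x hx => ?_) fun x hx => ?_ <;> rw [MonoidHom.mem_ker] at hx ⊢
    · rw [← reduction_reduction (Nat.gcd_dvd_left a b) ha, hx, map_one]
    · rw [← reduction_reduction (Nat.gcd_dvd_right a b) hb, hx, map_one]
  · intro g hg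
    obtain ⟨y, hya, hyb⟩ := exists_reduction_eq_and_reduction_eq ha hb (x := g) (z := 1)
      (by rwa [map_one])
    rw [← inv_mul_cancel_right g y]
    refine Subgroup.mul_mem_sup ?_ ?_ <;> simp [hya, hyb]

theorem sum_cclass {q n : ℕ} [NeZero q] (h : n ∣ q) {M : Type*} [AddCommMonoid M]
    (f : SL2 q → M) (x : SL2 q) :
    ∑ y ∈ cclass q n x, f y = ∑ k : (reduction h).ker, f (x * k) :=
  Finset.sum_bij' (fun y hy => ⟨x⁻¹ * y, (mem_cclass_iff h).1 hy⟩) (fun k _ => x * k)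
    (by simp) (by simp [mem_cclass_iff h]) (by simp) (by simp) (by simp)

theorem card_KQ {q n : ℕ} [NeZero q] (h : n ∣ q) : (KQ q n).card = Nat.card (reduction h).ker := by
  rw [KQ, Finset.card_eq_sum_ones, sum_cclass h, Finset.sum_const, Finset.card_univ,
    Nat.card_eq_fintype_card, smul_eq_mul, mul_one]

theorem muQ_eq_cosetAvg {q n : ℕ} [NeZero q] (h : n ∣ q) (μ : SL2 q → ℂ) :
    muQ q n μ = cosetAvg (reduction h).ker μ := by
  funext x
  rw [muQ, cosetAvg, card_KQ h, sum_cclass h, one_div]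
  -- the two sums differ only in the `Fintype` instance on the kernel
  congr!

theorem sum_cclass_eq_card_mul_cosetAvg {q n : ℕ} [NeZero q] (h : n ∣ q) (g : SL2 q → ℂ)
    (x : SL2 q) :
    ∑ y ∈ cclass q n x, g y = (KQ q n).card * cosetAvg (reduction h).ker g x := by
  rw [cosetAvg, card_KQ h, sum_cclass h, mul_inv_cancel_left₀ (Nat.cast_ne_zero.2 Nat.card_pos.ne')]
  congr!

theorem sum_cclass_muQ {q c m : ℕ} [NeZero q] (hc : c ∣ q) (hm : m ∣ q) (μ : SL2 q → ℂ)
    (x : SL2 q) :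
    ∑ y ∈ cclass q c x, muQ q m μ y = (KQ q c).card * muQ q (c.gcd m) μ x := by
  rw [sum_cclass_eq_card_mul_cosetAvg hc, muQ_eq_cosetAvg hm, cosetAvg_cosetAvg_of_normal,
    ker_reduction_sup_ker_reduction hc hm, muQ_eq_cosetAvg]

theorem muQ_eq_of_redEq {q n Q : ℕ} [NeZero q] (hn : n ∣ Q) (hQ : Q ∣ q) (μ : SL2 q → ℂ)
    {x y : SL2 q} (hxy : redEq q Q x y) : muQ q n μ x = muQ q n μ y := by
  have hker : x⁻¹ * y ∈ (reduction (hn.trans hQ)).ker := by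
    rw [MonoidHom.mem_ker, ← reduction_reduction hn hQ, map_mul, map_inv, (redEq_iff hQ).1 hxy,
      inv_mul_cancel, map_one]
  rw [muQ_eq_cosetAvg (hn.trans hQ), ← le_rightStabilizer_cosetAvg _ μ hker x,
    mul_inv_cancel_left]

theorem fQ_eq_of_redEq {q Q : ℕ} [NeZero q] (hQ : Q ∣ q) (μ : SL2 q → ℂ) {x y : SL2 q}
    (hxy : redEq q Q x y) : fQ q Q μ x = fQ q Q μ y :=
  Finset.sum_congr rfl fun d hd => by
    rw [muQ_eq_of_redEq (Nat.div_dvd_of_dvd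
      ((Nat.dvd_of_mem_divisors hd).trans (Nat.prod_primeFactors_dvd Q))) hQ μ hxy]

theorem sum_cclass_fQ {q Q q' : ℕ} [NeZero q] (hQ : Q ∣ q) (μ : SL2 q → ℂ) (hq' : q' ∣ Q)
    (hne : q' ≠ Q) (x : SL2 q) : ∑ y ∈ cclass q q' x, fQ q Q μ y = 0 := by
  have hQ0 : Q ≠ 0 := ne_zero_of_dvd_ne_zero (NeZero.ne q) hQ
  have hradQ : rad Q ∣ Q := Nat.prod_primeFactors_dvd Q
  obtain ⟨p, hp, hpQ, hq'p⟩ := exists_prime_dvd_and_dvd_div hQ0 hq' hne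
  have hprad : p ∣ rad Q := Finset.dvd_prod_of_mem _ (Nat.mem_primeFactors.2 ⟨hp, hpQ, hQ0⟩)
  calc ∑ y ∈ cclass q q' x, fQ q Q μ y
      = ∑ d ∈ (rad Q).divisors, (ArithmeticFunction.moebius d : ℂ) *
          ((KQ q q').card * muQ q (q'.gcd (Q / d)) μ x) := by
        unfold fQ
        rw [Finset.sum_comm]
        refine Finset.sum_congr rfl fun d hd => ?_
        rw [← Finset.mul_sum, sum_cclass_muQ (hq'.trans hQ)
          ((Nat.div_dvd_of_dvd ((Nat.dvd_of_mem_divisors hd).trans hradQ)).trans hQ)]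
    _ = 0 := by
      refine sum_divisors_moebius_mul_eq_zero (squarefree_rad Q) hp hprad fun d hd => ?_
      have hpd : p * d ∣ rad Q := Nat.mul_dvd_of_dvd_div hprad (Nat.dvd_of_mem_divisors hd)
      have hdp : d.Coprime p := Nat.coprime_comm.1 <| hp.coprime_iff_not_dvd.2 fun h =>
        hp.prime.not_isUnit (squarefree_rad Q p ((Nat.mul_dvd_mul_left p h).trans hpd))
      rw [Nat.gcd_div_mul_eq_gcd_div hp (Nat.pos_of_mem_divisors hd) hdp (hpd.trans hradQ) hq'p]

/-- **`f_Q` lies in the space `H_Q`:** it is constant on congruence classes mod `Q`,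
and its sum over any congruence class mod `q′` vanishes for every proper divisor
`q′` of `Q`. -/
theorem fQ_mem_HQ (q : ℕ) [NeZero q] (μ : SL2 q → ℂ) (Q : ℕ) (hQ : Q ∣ q) :
    (∀ x y : SL2 q, redEq q Q x y → fQ q Q μ x = fQ q Q μ y) ∧
    (∀ q' : ℕ, q' ∣ Q → q' ≠ Q → ∀ x : SL2 q,
      ∑ y ∈ cclass q q' x, fQ q Q μ y = 0) :=
  ⟨fun _ _ => fQ_eq_of_redEq hQ μ, fun _ hq' hne => sum_cclass_fQ hQ μ hq' hne⟩
end

section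
/- Let q be a positive integer and Q a divisor of q. Write q = q₁q₂ where q₁ = ∏_{p | Q} p^{v_p(q)} and q₂ = q/q₁ (so q₁, q₂ are coprime and q₁ has the same prime divisors as Q). Let a, b ∈ ℤ/qℤ, and let s̄ ∈ SL₂(ℤ/Qℤ) satisfy: s̄₂₁ā + s̄₂₂ is a unit in ℤ/Qℤ and s̄₁₁ā + s̄₁₂ = b̄(s̄₂₁ā + s̄₂₂), where ā, b̄ are the reductions of a, b mod Q. Then #{s ∈ SL₂(ℤ/qℤ) : s ≡ s̄ (mod Q), s₂₁a + s₂₂ is a unit in ℤ/qℤ, and s₁₁a + s₁₂ = b(s₂₁a + s₂₂)} = (q₁/Q)² · q₂ · φ(q₂) = (q/Q)² · φ(q₂)/q₂, where φ is Euler's totient function. -/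
/-! The elements of `SL₂(R)` sending `a` to `b` with invertible denominator are parametrised by
the denominator `u ∈ Rˣ` and the lower-left entry `t ∈ R`, compatibly with ring homomorphisms.
So the lifts of `s̄` correspond to the pairs `(u, t) ∈ (ℤ/qℤ)ˣ × ℤ/qℤ` reducing to the parameters
of `s̄`, and there are `φ(q)/φ(Q) · q/Q` of them. Since `q₁` and `Q` have the same prime
factors, `φ(q₁)/q₁ = φ(Q)/Q`, and `φ(q) = φ(q₁) φ(q₂)` turns the count into
`(q₁/Q)² q₂ φ(q₂)`. -/

open scoped Classical

open Finset Matrix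
open scoped MatrixGroups Nat

@[to_additive AddMonoidHom.card_fiber_mul_card_of_surjective]
lemma MonoidHom.card_fiber_mul_card_of_surjective {G M F : Type*} [Group G] [Fintype G]
    [Monoid M] [Fintype M] [DecidableEq M] [FunLike F G M] [MonoidHomClass F G M] {f : F}
    (hf : Function.Surjective f) (y : M) :
    #{g | f g = y} * Fintype.card M = Fintype.card G := by
  calc #{g | f g = y} * Fintype.card M = ∑ z : M, #{g | f g = z} := by
        rw [sum_congr rfl fun z _ => card_fiber_eq_of_mem_range f (hf z) (hf y), sum_const,
          card_univ, smul_eq_mul, mul_comm]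
    _ = Fintype.card G := (card_eq_sum_card_fiberwise fun g _ => mem_univ (f g)).symm

namespace Nat

lemma primeFactors_prod_pow {s : Finset ℕ} {e : ℕ → ℕ} (hs : ∀ p ∈ s, p.Prime)
    (he : ∀ p ∈ s, e p ≠ 0) : (∏ p ∈ s, p ^ e p).primeFactors = s := by
  induction s using Finset.induction_on with
  | empty => simp
  | insert p s hp ih =>
    have hs' : ∀ r ∈ s, r.Prime := fun r hr => hs r (mem_insert_of_mem hr)
    rw [prod_insert hp, primeFactors_mul (pow_ne_zero _ (hs p (mem_insert_self p s)).ne_zero)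
      (prod_ne_zero_iff.mpr fun r hr => pow_ne_zero _ (hs' r hr).ne_zero),
      primeFactors_prime_pow (he p (mem_insert_self p s)) (hs p (mem_insert_self p s)),
      ih hs' fun r hr => he r (mem_insert_of_mem hr), insert_eq]

section

variable {n : ℕ} {s : Finset ℕ}

lemma prod_pow_factorization_mul_prod_sdiff (hn : n ≠ 0) (hs : s ⊆ n.primeFactors) :
    (∏ p ∈ s, p ^ n.factorization p) * ∏ p ∈ n.primeFactors \ s, p ^ n.factorization p = n := by
  rw [mul_comm, prod_sdiff hs, ← prod_primeFactors_pow_factorization hn]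

lemma div_prod_pow_factorization (hn : n ≠ 0) (hs : s ⊆ n.primeFactors) :
    n / ∏ p ∈ s, p ^ n.factorization p = ∏ p ∈ n.primeFactors \ s, p ^ n.factorization p :=
  have h := prod_pow_factorization_mul_prod_sdiff hn hs
  Nat.div_eq_of_eq_mul_right (Nat.pos_of_ne_zero (left_ne_zero_of_mul (h ▸ hn))) h.symm

lemma prod_pow_factorization_mul_div (hn : n ≠ 0) (hs : s ⊆ n.primeFactors) :
    (∏ p ∈ s, p ^ n.factorization p) * (n / ∏ p ∈ s, p ^ n.factorization p) = n := by
  rw [div_prod_pow_factorization hn hs, prod_pow_factorization_mul_prod_sdiff hn hs]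

lemma coprime_prod_pow_factorization_div (hn : n ≠ 0) (hs : s ⊆ n.primeFactors) :
    Coprime (∏ p ∈ s, p ^ n.factorization p) (n / ∏ p ∈ s, p ^ n.factorization p) := by
  rw [div_prod_pow_factorization hn hs]
  exact Coprime.prod_left fun _ hp => coprime_prod_right_iff.mpr fun _ hr =>
    coprime_pow_primes _ _ (prime_of_mem_primeFactors (hs hp))
      (prime_of_mem_primeFactors (mem_sdiff.mp hr).1) fun h => (mem_sdiff.mp hr).2 (h ▸ hp)

lemma primeFactors_prod_pow_factorization (hs : s ⊆ n.primeFactors) :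
    (∏ p ∈ s, p ^ n.factorization p).primeFactors = s :=
  primeFactors_prod_pow (fun p hp => prime_of_mem_primeFactors (hs hp))
    fun p hp => Finsupp.mem_support_iff.mp <| by rw [support_factorization]; exact hs hp

end

lemma totient_mul_eq_of_primeFactors_eq {m n : ℕ} (h : m.primeFactors = n.primeFactors) :
    φ m * n = φ n * m := by
  have : ((φ m * n : ℕ) : ℚ) = (φ n * m : ℕ) := by
    push_cast
    rw [totient_eq_mul_prod_factors, totient_eq_mul_prod_factors, h]
    ring
  exact_mod_cast this

lemma totient_mul_mul_eq {Q q₁ q₂ : ℕ} (hcop : q₁.Coprime q₂)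
    (hpf : q₁.primeFactors = Q.primeFactors) :
    φ (q₁ * q₂) * (q₁ * q₂) * Q = q₁ ^ 2 * q₂ * φ q₂ * φ Q := by
  rw [totient_mul hcop]
  linear_combination (q₂ * φ q₂ * q₁) * totient_mul_eq_of_primeFactors_eq hpf

lemma cast_mul_eq_of_mul_totient_eq_of_mul_eq {Q q₁ q₂ c₁ c₂ : ℕ} (hQ : Q ≠ 0)
    (hcop : q₁.Coprime q₂) (hpf : q₁.primeFactors = Q.primeFactors)
    (h₁ : c₁ * φ Q = φ (q₁ * q₂)) (h₂ : c₂ * Q = q₁ * q₂) :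
    ((c₁ * c₂ : ℕ) : ℝ) = ((q₁ : ℝ) / Q) ^ 2 * q₂ * φ q₂ := by
  have key : c₁ * c₂ * Q ^ 2 * φ Q = q₁ ^ 2 * q₂ * φ q₂ * φ Q := by
    rw [← totient_mul_mul_eq hcop hpf, ← h₁, ← h₂]
    ring
  rw [div_pow]
  field_simp
  exact_mod_cast Nat.eq_of_mul_eq_mul_right (totient_pos.mpr (Nat.pos_of_ne_zero hQ)) key

end Nat

namespace ZMod

variable {q Q : ℕ} [NeZero q] [NeZero Q]

lemma card_filter_unitsMap_eq_mul_totient (hQ : Q ∣ q) (y : (ZMod Q)ˣ) :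
    #{u | unitsMap hQ u = y} * φ Q = φ q := by
  have := MonoidHom.card_fiber_mul_card_of_surjective (unitsMap_surjective hQ) y
  rwa [card_units_eq_totient, card_units_eq_totient] at this

lemma card_filter_castHom_eq_mul (hQ : Q ∣ q) (y : ZMod Q) :
    #{t : ZMod q | castHom hQ (ZMod Q) t = y} * Q = q := by
  have := AddMonoidHom.card_fiber_mul_card_of_surjective
    (ringHom_surjective (castHom hQ (ZMod Q))) y
  rwa [ZMod.card, ZMod.card] at this

end ZMod

namespace Matrix.SpecialLinearGroup

variable {R S : Type*} [CommRing R] [CommRing S] {a b : R}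

/- `s` sends `a` to `b` under `z ↦ (s₀₀ z + s₀₁) / (s₁₀ z + s₁₁)`, with denominators cleared. -/
def SendsTo (a b : R) (s : SL(2, R)) : Prop :=
  IsUnit (s 1 0 * a + s 1 1) ∧ s 0 0 * a + s 0 1 = b * (s 1 0 * a + s 1 1)

/- The bottom row `(t, u - t a)` makes the denominator `u`; the top row `(x, b u - x a)` then
sends `a` to `b`, and `det = x u - b u t = 1` forces `x = u⁻¹ + b t`. -/
def sendsToMk (a b : R) (u : Rˣ) (t : R) : SL(2, R) :=
  ⟨!![↑u⁻¹ + b * t, b * u - a * (↑u⁻¹ + b * t); t, u - t * a], by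
    rw [det_fin_two_of]
    linear_combination u.inv_mul⟩

lemma sendsTo_sendsToMk (a b : R) (u : Rˣ) (t : R) : SendsTo a b (sendsToMk a b u t) := by
  refine ⟨?_, ?_⟩
  · convert u.isUnit using 1
    simp [sendsToMk]
  · simp only [sendsToMk, of_apply, cons_val', cons_val_zero, cons_val_one, cons_val_fin_one,
      add_sub_cancel]
    ring

lemma eq_sendsToMk {s : SL(2, R)} (hs : SendsTo a b s) :
    s = sendsToMk a b hs.1.unit (s 1 0) := by
  obtain ⟨hu, hb⟩ := hs
  have hdet : s 0 0 * s 1 1 - s 0 1 * s 1 0 = 1 := by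
    rw [← det_fin_two]
    exact s.prop
  have h00 : s 0 0 = ↑hu.unit⁻¹ + b * s 1 0 := by
    refine hu.mul_right_cancel ?_
    linear_combination hdet + s 1 0 * hb - hu.val_inv_mul
  ext i j
  fin_cases i <;> fin_cases j <;> simp [sendsToMk]
  exacts [h00, by linear_combination hb - a * h00]

noncomputable def sendsToEquiv (a b : R) : {s : SL(2, R) // SendsTo a b s} ≃ Rˣ × R where
  toFun s := (s.2.1.unit, s.1 1 0)
  invFun p := ⟨sendsToMk a b p.1 p.2, sendsTo_sendsToMk a b p.1 p.2⟩
  left_inv s := Subtype.ext (eq_sendsToMk s.2).symm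
  right_inv p := Prod.ext (Units.ext (by simp [sendsToMk])) rfl

lemma map_sendsToMk (f : R →+* S) (u : Rˣ) (t : R) :
    map f (sendsToMk a b u t) = sendsToMk (f a) (f b) (Units.map f u) (f t) := by
  ext i j
  rw [map_apply_coe]
  fin_cases i <;> fin_cases j <;> simp [sendsToMk]

lemma map_eq_iff_of_sendsTo {f : R →+* S} {s : SL(2, R)} {s' : SL(2, S)} (hs : SendsTo a b s)
    (hs' : SendsTo (f a) (f b) s') :
    map f s = s' ↔ Prod.map (Units.map f) f (sendsToEquiv a b ⟨s, hs⟩)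
      = sendsToEquiv (f a) (f b) ⟨s', hs'⟩ := by
  rw [← (sendsToEquiv (f a) (f b)).symm.injective.eq_iff, Equiv.symm_apply_apply,
    ← Subtype.coe_inj]
  conv_lhs => rw [eq_sendsToMk hs, map_sendsToMk]
  rfl

lemma card_filter_map_eq_and_sendsTo [Fintype R] [DecidableEq R] [DecidableEq S]
    (f : R →+* S) {s' : SL(2, S)} (hs' : SendsTo (f a) (f b) s') :
    #{s | map f s = s' ∧ SendsTo a b s}
      = #{u : Rˣ | Units.map f u = hs'.1.unit} * #{t | f t = s' 1 0} := by
  rw [← card_product, ← filter_product, univ_product_univ, ← Fintype.card_subtype,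
    ← Fintype.card_subtype]
  exact Fintype.card_congr <| (Equiv.subtypeEquivRight fun _ => and_comm).trans <|
    (Equiv.subtypeSubtypeEquivSubtypeInter _ _).symm.trans <|
    Equiv.subtypeEquiv (sendsToEquiv a b) fun s =>
      (map_eq_iff_of_sendsTo s.2 hs').trans Prod.ext_iff

end Matrix.SpecialLinearGroup

open Matrix.SpecialLinearGroup

theorem hensel_lifting_count_general (q : ℕ) [NeZero q] (Q : ℕ) (hQ : Q ∣ q)
    (q₁ q₂ : ℕ)
    (hq₁ : q₁ = ∏ p ∈ Q.primeFactors, p ^ (q.factorization p))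
    (hq₂ : q₂ = q / q₁)
    (a b : ZMod q) (sbar : SL2 Q)
    (hunit : IsUnit ((sbar : Matrix (Fin 2) (Fin 2) (ZMod Q)) 1 0 * (ZMod.cast a : ZMod Q)
      + (sbar : Matrix (Fin 2) (Fin 2) (ZMod Q)) 1 1))
    (heq : (sbar : Matrix (Fin 2) (Fin 2) (ZMod Q)) 0 0 * (ZMod.cast a : ZMod Q)
        + (sbar : Matrix (Fin 2) (Fin 2) (ZMod Q)) 0 1
      = (ZMod.cast b : ZMod Q) *
        ((sbar : Matrix (Fin 2) (Fin 2) (ZMod Q)) 1 0 * (ZMod.cast a : ZMod Q)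
          + (sbar : Matrix (Fin 2) (Fin 2) (ZMod Q)) 1 1)) :
    ((Finset.univ.filter (fun s : SL2 q =>
        (∀ i j, (ZMod.cast ((s : Matrix (Fin 2) (Fin 2) (ZMod q)) i j) : ZMod Q)
          = (sbar : Matrix (Fin 2) (Fin 2) (ZMod Q)) i j) ∧
        IsUnit ((s : Matrix (Fin 2) (Fin 2) (ZMod q)) 1 0 * a
          + (s : Matrix (Fin 2) (Fin 2) (ZMod q)) 1 1) ∧
        (s : Matrix (Fin 2) (Fin 2) (ZMod q)) 0 0 * a
            + (s : Matrix (Fin 2) (Fin 2) (ZMod q)) 0 1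
          = b * ((s : Matrix (Fin 2) (Fin 2) (ZMod q)) 1 0 * a
            + (s : Matrix (Fin 2) (Fin 2) (ZMod q)) 1 1))).card : ℝ)
      = ((q₁ : ℝ) / (Q : ℝ)) ^ 2 * (q₂ : ℝ) * (q₂.totient : ℝ) := by
  have hq0 : q ≠ 0 := NeZero.ne q
  have hQ0 : Q ≠ 0 := ne_zero_of_dvd_ne_zero hq0 hQ
  have : NeZero Q := ⟨hQ0⟩
  have hsub : Q.primeFactors ⊆ q.primeFactors := Nat.primeFactors_mono hQ hq0
  have hq : q = q₁ * q₂ := by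
    subst hq₁ hq₂
    exact (Nat.prod_pow_factorization_mul_div hq0 hsub).symm
  have hcop : q₁.Coprime q₂ := by
    subst hq₁ hq₂
    exact Nat.coprime_prod_pow_factorization_div hq0 hsub
  have hpf : q₁.primeFactors = Q.primeFactors := hq₁ ▸ Nat.primeFactors_prod_pow_factorization hsub
  set f := ZMod.castHom hQ (ZMod Q)
  have hsbar : SendsTo (f a) (f b) sbar := ⟨hunit, heq⟩
  calc _ = (#{s : SL2 q | map f s = sbar ∧ SendsTo a b s} : ℝ) := by
        congr 2
        ext s
        simp only [mem_filter, mem_univ, true_and]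
        exact and_congr_left' (ext_iff (map f s) sbar).symm
    _ = ((q₁ : ℝ) / Q) ^ 2 * q₂ * q₂.totient := by
      rw [card_filter_map_eq_and_sendsTo f hsbar]
      exact Nat.cast_mul_eq_of_mul_totient_eq_of_mul_eq hQ0 hcop hpf
        ((ZMod.card_filter_unitsMap_eq_mul_totient hQ _).trans (congrArg _ hq))
        ((ZMod.card_filter_castHom_eq_mul hQ _).trans hq)

/-- **Hensel lifting count.** Let `Q ∣ q`, write `q = q₁q₂` with
`q₁ = ∏_{p | Q} p^{v_p(q)}` and `q₂ = q/q₁`. If `s̄ ∈ SL₂(ℤ/Qℤ)` sends `ā` to `b̄`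
under the fractional linear action (with `s̄₂₁ā + s̄₂₂` a unit), then the number of
`s ∈ SL₂(ℤ/qℤ)` with `s ≡ s̄ (mod Q)` sending `a` to `b` under the fractional linear
action equals `(q₁/Q)²·q₂·φ(q₂) = (q/Q)²·φ(q₂)/q₂`. -/
theorem hensel_lifting_count (q : ℕ) [NeZero q] (hq : 0 < q) (Q : ℕ) (hQ : Q ∣ q)
    (q₁ q₂ : ℕ)
    (hq₁ : q₁ = ∏ p ∈ Q.primeFactors, p ^ (q.factorization p))
    (hq₂ : q₂ = q / q₁)
    (a b : ZMod q) (sbar : SL2 Q)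
    (hunit : IsUnit ((sbar : Matrix (Fin 2) (Fin 2) (ZMod Q)) 1 0 * (ZMod.cast a : ZMod Q)
      + (sbar : Matrix (Fin 2) (Fin 2) (ZMod Q)) 1 1))
    (heq : (sbar : Matrix (Fin 2) (Fin 2) (ZMod Q)) 0 0 * (ZMod.cast a : ZMod Q)
        + (sbar : Matrix (Fin 2) (Fin 2) (ZMod Q)) 0 1
      = (ZMod.cast b : ZMod Q) *
        ((sbar : Matrix (Fin 2) (Fin 2) (ZMod Q)) 1 0 * (ZMod.cast a : ZMod Q)
          + (sbar : Matrix (Fin 2) (Fin 2) (ZMod Q)) 1 1)) :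
    ((Finset.univ.filter (fun s : SL2 q =>
        (∀ i j, (ZMod.cast ((s : Matrix (Fin 2) (Fin 2) (ZMod q)) i j) : ZMod Q)
          = (sbar : Matrix (Fin 2) (Fin 2) (ZMod Q)) i j) ∧
        IsUnit ((s : Matrix (Fin 2) (Fin 2) (ZMod q)) 1 0 * a
          + (s : Matrix (Fin 2) (Fin 2) (ZMod q)) 1 1) ∧
        (s : Matrix (Fin 2) (Fin 2) (ZMod q)) 0 0 * a
            + (s : Matrix (Fin 2) (Fin 2) (ZMod q)) 0 1
          = b * ((s : Matrix (Fin 2) (Fin 2) (ZMod q)) 1 0 * a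
            + (s : Matrix (Fin 2) (Fin 2) (ZMod q)) 1 1))).card : ℝ)
      = ((q₁ : ℝ) / (Q : ℝ)) ^ 2 * (q₂ : ℝ) * (q₂.totient : ℝ) :=
  hensel_lifting_count_general q Q hQ q₁ q₂ hq₁ hq₂ a b sbar hunit heq
end
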